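/- Define h_ℓ = (−1)^ℓ binom(−1/2, ℓ) / log(max(ℓ,2)) for ℓ ∈ ℕ. Then: (i) Σ_{ℓ≥0} h_ℓ² < ∞; and (ii) for every ν ≥ 0 there exist constants A, B > 0 (depending only on ν) such that for all ℓ ∈ ℕ, with c_ℓ = Σ_{k=0}^{ℓ} (−1)^k binom(−ν, k) · h_{ℓ−k} (the ℓ-th coefficient of the product of the power series (1−z)^{−ν} and Σ h_m z^m, up to the sign (−1)^ℓ), one has A · (max(ℓ,1))^{ν−1/2} / log(max(ℓ,2)) ≤ |c_ℓ| ≤ B · (max(ℓ,1))^{ν−1/2}. -/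

import Mathlib

/-!
Write `b_ν(k) = (-1)^k binom(-ν, k) = ν (ν + 1) ⋯ (ν + k - 1) / k!`, the coefficient of `z^k` in
`(1 - z)^(-ν)`; it is nonnegative for `ν ≥ 0`, and `h_m = b_{1/2}(m) / log (max m 2)`.
Euler's limit formula `Γ(μ) = lim n^μ n! / (μ (μ + 1) ⋯ (μ + n))` says exactly that
`b_μ(ℓ) ℓ^(1-μ) → 1 / Γ(μ)` for `μ > 0`, so `b_μ(ℓ)` is comparable to `ℓ^(μ-1)` uniformly in `ℓ`.
Hence `h_m² ≲ 1 / (m log² m)`, summable by the integral test.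
For the product, all terms of `c_ℓ` are nonnegative and `log 2 ≤ log (max (ℓ-k) 2) ≤ log (max ℓ 2)`,
so by the Chu–Vandermonde identity `∑ b_ν(k) b_{1/2}(ℓ-k) = b_{ν+1/2}(ℓ)` the coefficient `c_ℓ`
lies between `b_{ν+1/2}(ℓ) / log (max ℓ 2)` and `b_{ν+1/2}(ℓ) / log 2`.
-/

/-- The generalized binomial coefficient `binom(x, k) = (∏_{j=0}^{k−1} (x − j)) / k!`. -/
noncomputable def genBinom (x : ℝ) (k : ℕ) : ℝ :=
  (∏ j ∈ Finset.range k, (x - j)) / (k.factorial)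

/-- The sequence `h_ℓ = (−1)^ℓ binom(−1/2, ℓ) / log(max(ℓ,2))`. -/
noncomputable def hSeq (ℓ : ℕ) : ℝ :=
  (-1 : ℝ) ^ ℓ * genBinom (-(1 / 2)) ℓ / Real.log ((max ℓ 2 : ℕ) : ℝ)

open Finset Filter Topology Real Polynomial

theorem genBinom_eq_ringChoose (x : ℝ) (k : ℕ) : genBinom x k = Ring.choose x k := by
  rw [Ring.choose_eq_smul, ← aeval_eq_smeval, aeval_def, eval₂_eq_eval_map, descPochhammer_map,
    descPochhammer_eval_eq_prod_range, genBinom, smul_eq_mul, div_eq_inv_mul]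

theorem genBinom_add_eq_sum (x y : ℝ) (ℓ : ℕ) :
    genBinom (x + y) ℓ = ∑ k ∈ range (ℓ + 1), genBinom x k * genBinom y (ℓ - k) := by
  simp only [genBinom_eq_ringChoose, Ring.add_choose_eq ℓ (Commute.all x y),
    Nat.sum_antidiagonal_eq_sum_range_succ (fun i j => Ring.choose x i * Ring.choose y j)]

noncomputable def negBinomCoeff (ν : ℝ) (k : ℕ) : ℝ := (-1) ^ k * genBinom (-ν) k

theorem negBinomCoeff_eq_prod_div (ν : ℝ) (k : ℕ) :
    negBinomCoeff ν k = (∏ j ∈ range k, (ν + j)) / k.factorial := by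
  have hneg : ∏ j ∈ range k, (-ν - j) = (-1) ^ k * ∏ j ∈ range k, (ν + j) := by
    simpa only [neg_add', card_range] using prod_neg (s := range k) fun j : ℕ => ν + (j : ℝ)
  rw [negBinomCoeff, genBinom, hneg, mul_div_assoc', ← mul_assoc, ← mul_pow]
  norm_num

theorem negBinomCoeff_nonneg {ν : ℝ} (hν : 0 ≤ ν) (k : ℕ) : 0 ≤ negBinomCoeff ν k := by
  rw [negBinomCoeff_eq_prod_div]
  exact div_nonneg (prod_nonneg fun j _ => by positivity) (by positivity)

theorem negBinomCoeff_pos {ν : ℝ} (hν : 0 < ν) (k : ℕ) : 0 < negBinomCoeff ν k := by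
  rw [negBinomCoeff_eq_prod_div]
  exact div_pos (prod_pos fun j _ => by positivity) (by positivity)

theorem sum_negBinomCoeff_mul (ν μ : ℝ) (ℓ : ℕ) :
    ∑ k ∈ range (ℓ + 1), negBinomCoeff ν k * negBinomCoeff μ (ℓ - k) =
      negBinomCoeff (ν + μ) ℓ := by
  rw [negBinomCoeff, neg_add, genBinom_add_eq_sum, mul_sum]
  refine sum_congr rfl fun k hk => ?_
  have hsign : (-1 : ℝ) ^ ℓ = (-1) ^ k * (-1) ^ (ℓ - k) := by
    rw [← pow_add, Nat.add_sub_cancel' (Nat.lt_succ_iff.mp (mem_range.mp hk))]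
  rw [negBinomCoeff, negBinomCoeff, hsign]
  ring

theorem negBinomCoeff_succ_mul_GammaSeq {μ : ℝ} (hμ : 0 < μ) (n : ℕ) :
    negBinomCoeff μ (n + 1) * GammaSeq μ n = n ^ μ / (n + 1) := by
  have hprod : ∏ j ∈ range (n + 1), (μ + j) ≠ 0 := (prod_pos fun j _ => by positivity).ne'
  rw [negBinomCoeff_eq_prod_div, GammaSeq, Nat.factorial_succ]
  field_simp
  push_cast
  ring

theorem tendsto_negBinomCoeff_div_rpow {μ : ℝ} (hμ : 0 < μ) :
    Tendsto (fun ℓ : ℕ => negBinomCoeff μ ℓ / ((max ℓ 1 : ℕ) : ℝ) ^ (μ - 1)) atTop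
      (𝓝 (Gamma μ)⁻¹) := by
  rw [← tendsto_add_atTop_iff_nat 1]
  have hratio : Tendsto (fun n : ℕ => ((n : ℝ) / (n + 1)) ^ μ) atTop (𝓝 1) := by
    simpa using (tendsto_natCast_div_add_atTop (1 : ℝ)).rpow_const (Or.inl one_ne_zero) (p := μ)
  have hlim := hratio.div (GammaSeq_tendsto_Gamma μ) (Gamma_pos_of_pos hμ).ne'
  rw [one_div] at hlim
  refine hlim.congr' ?_
  filter_upwards [eventually_gt_atTop 0] with n hn
  have hG : GammaSeq μ n ≠ 0 := by
    rw [GammaSeq]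
    exact (div_pos (by positivity) (prod_pos fun j _ => by positivity)).ne'
  have hb := eq_div_of_mul_eq hG (negBinomCoeff_succ_mul_GammaSeq hμ n)
  rw [Pi.div_apply, hb, div_rpow (by positivity) (by positivity), max_eq_left (by omega),
    Nat.cast_succ, rpow_sub_one (by positivity)]
  field_simp

theorem exists_pos_bounds_of_tendsto {u : ℕ → ℝ} {L : ℝ} (hu : ∀ n, 0 < u n)
    (hL : 0 < L) (h : Tendsto u atTop (𝓝 L)) :
    ∃ c C : ℝ, 0 < c ∧ 0 < C ∧ ∀ n, c ≤ u n ∧ u n ≤ C := by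
  obtain ⟨C, hC⟩ := h.bddAbove_range
  obtain ⟨D, hD⟩ := (h.inv₀ hL.ne').bddAbove_range
  have hD0 : 0 < D := (inv_pos.mpr (hu 0)).trans_le (hD ⟨0, rfl⟩)
  refine ⟨D⁻¹, C, inv_pos.mpr hD0, (hu 0).trans_le (hC ⟨0, rfl⟩), fun n => ⟨?_, hC ⟨n, rfl⟩⟩⟩
  exact inv_le_of_inv_le₀ (hu n) (hD ⟨n, rfl⟩)

theorem exists_negBinomCoeff_bounds {μ : ℝ} (hμ : 0 < μ) :
    ∃ c C : ℝ, 0 < c ∧ 0 < C ∧ ∀ ℓ : ℕ,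
      c * ((max ℓ 1 : ℕ) : ℝ) ^ (μ - 1) ≤ negBinomCoeff μ ℓ ∧
      negBinomCoeff μ ℓ ≤ C * ((max ℓ 1 : ℕ) : ℝ) ^ (μ - 1) := by
  have hpow : ∀ ℓ : ℕ, 0 < ((max ℓ 1 : ℕ) : ℝ) ^ (μ - 1) := fun ℓ =>
    rpow_pos_of_pos (by simp) _
  obtain ⟨c, C, hc, hC, hbounds⟩ := exists_pos_bounds_of_tendsto
    (fun ℓ => div_pos (negBinomCoeff_pos hμ ℓ) (hpow ℓ))
    (inv_pos.mpr (Gamma_pos_of_pos hμ)) (tendsto_negBinomCoeff_div_rpow hμ)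
  refine ⟨c, C, hc, hC, fun ℓ => ?_⟩
  rw [← le_div_iff₀ (hpow ℓ), ← div_le_iff₀ (hpow ℓ)]
  exact hbounds ℓ

theorem summable_inv_div_log_sq : Summable fun n : ℕ => (n : ℝ)⁻¹ / log n ^ 2 := by
  refine AntitoneOn.summable_of_integrableOn_Ioi (f := fun t : ℝ => t⁻¹ / log t ^ 2) (N := 2)
    ?_ ?_ ?_
  · intro a ha b _ hab
    have ha2 : (2 : ℝ) ≤ a := by simpa using ha
    have hlog : 0 < log a := log_pos (by linarith)
    have ha0 : 0 < a := by linarith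
    dsimp only
    gcongr
  · rw [Nat.cast_ofNat]
    exact integrableOn_inv_div_log_sq_Ioi one_lt_two
  · intro t ht
    have : 0 < t := by simp at ht; linarith
    positivity

theorem log_max_two_pos (m : ℕ) : 0 < log ((max m 2 : ℕ) : ℝ) :=
  log_pos (Nat.one_lt_cast.mpr (lt_max_of_lt_right one_lt_two))

theorem hSeq_eq (m : ℕ) : hSeq m = negBinomCoeff (1 / 2) m / log ((max m 2 : ℕ) : ℝ) := rfl

theorem summable_hSeq_sq : Summable fun ℓ : ℕ => hSeq ℓ ^ 2 := by
  obtain ⟨_, C, -, -, hbound⟩ := exists_negBinomCoeff_bounds (μ := 1 / 2) (by norm_num)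
  refine .of_norm_bounded_eventually_nat (summable_inv_div_log_sq.mul_left (C ^ 2)) ?_
  filter_upwards [eventually_ge_atTop 2] with m hm
  rw [norm_of_nonneg (sq_nonneg _), hSeq_eq, max_eq_left hm, div_pow]
  have hbm := (hbound m).2
  rw [max_eq_left (by omega : 1 ≤ m)] at hbm
  calc negBinomCoeff (1 / 2) m ^ 2 / log m ^ 2
      ≤ (C * (m : ℝ) ^ (1 / 2 - 1 : ℝ)) ^ 2 / log m ^ 2 := by
        gcongr
        exact negBinomCoeff_nonneg (by norm_num) m
    _ = C ^ 2 * ((m : ℝ)⁻¹ / log m ^ 2) := by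
        rw [mul_pow, ← rpow_mul_natCast (Nat.cast_nonneg m)]
        norm_num [rpow_neg_one, mul_div_assoc]

theorem sum_negBinomCoeff_mul_hSeq_bounds {ν : ℝ} (hν : 0 ≤ ν) (ℓ : ℕ) :
    negBinomCoeff (ν + 1 / 2) ℓ / log ((max ℓ 2 : ℕ) : ℝ)
        ≤ ∑ k ∈ range (ℓ + 1), negBinomCoeff ν k * hSeq (ℓ - k) ∧
      ∑ k ∈ range (ℓ + 1), negBinomCoeff ν k * hSeq (ℓ - k)
        ≤ negBinomCoeff (ν + 1 / 2) ℓ / log 2 := by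
  simp only [hSeq_eq, ← mul_div_assoc, ← sum_negBinomCoeff_mul, sum_div]
  have hnum : ∀ k, 0 ≤ negBinomCoeff ν k * negBinomCoeff (1 / 2) (ℓ - k) := fun k =>
    mul_nonneg (negBinomCoeff_nonneg hν k) (negBinomCoeff_nonneg (by norm_num) _)
  constructor
  all_goals
    refine sum_le_sum fun k _ => div_le_div_of_nonneg_left (hnum k) ?_ ?_
  · exact log_max_two_pos _
  · exact log_le_log (by positivity) (Nat.cast_le.mpr (max_le_max (Nat.sub_le ℓ k) le_rfl))
  · exact log_pos one_lt_two
  · exact log_le_log two_pos (by exact_mod_cast le_max_right _ _)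

/-- (i) `∑ h_ℓ² < ∞`, and (ii) for every `ν ≥ 0` the coefficients
`c_ℓ = ∑_{k≤ℓ} (−1)^k binom(−ν,k) h_{ℓ−k}` of the product of `(1−z)^{−ν}` with `∑ h_m z^m`
satisfy `A (max(ℓ,1))^{ν−1/2} / log(max(ℓ,2)) ≤ |c_ℓ| ≤ B (max(ℓ,1))^{ν−1/2}`. -/
theorem hSeq_summable_and_product_bounds :
    Summable (fun ℓ : ℕ => (hSeq ℓ) ^ 2) ∧
    ∀ ν : ℝ, 0 ≤ ν → ∃ A B : ℝ, 0 < A ∧ 0 < B ∧ ∀ ℓ : ℕ,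
      A * ((max ℓ 1 : ℕ) : ℝ) ^ (ν - 1 / 2) / Real.log ((max ℓ 2 : ℕ) : ℝ)
          ≤ |∑ k ∈ Finset.range (ℓ + 1), (-1 : ℝ) ^ k * genBinom (-ν) k * hSeq (ℓ - k)| ∧
      |∑ k ∈ Finset.range (ℓ + 1), (-1 : ℝ) ^ k * genBinom (-ν) k * hSeq (ℓ - k)|
          ≤ B * ((max ℓ 1 : ℕ) : ℝ) ^ (ν - 1 / 2) := by
  refine ⟨summable_hSeq_sq, fun ν hν => ?_⟩
  simp only [← negBinomCoeff.eq_1]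
  obtain ⟨c, C, hc, hC, hbound⟩ := exists_negBinomCoeff_bounds (μ := ν + 1 / 2) (by positivity)
  rw [show ν + 1 / 2 - 1 = ν - 1 / 2 by ring] at hbound
  refine ⟨c, C / log 2, hc, div_pos hC (log_pos one_lt_two), fun ℓ => ?_⟩
  obtain ⟨hlower, hupper⟩ := sum_negBinomCoeff_mul_hSeq_bounds hν ℓ
  have hsum_nonneg :=
    (div_nonneg (negBinomCoeff_nonneg (by positivity) ℓ) (log_max_two_pos ℓ).le).trans hlower
  rw [abs_of_nonneg hsum_nonneg]
  constructor
  · calc c * ((max ℓ 1 : ℕ) : ℝ) ^ (ν - 1 / 2) / log ((max ℓ 2 : ℕ) : ℝ)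
        ≤ negBinomCoeff (ν + 1 / 2) ℓ / log ((max ℓ 2 : ℕ) : ℝ) := by
          gcongr
          exact (hbound ℓ).1
      _ ≤ _ := hlower
  · calc _ ≤ negBinomCoeff (ν + 1 / 2) ℓ / log 2 := hupper
      _ ≤ C * ((max ℓ 1 : ℕ) : ℝ) ^ (ν - 1 / 2) / log 2 := by
        gcongr
        exact (hbound ℓ).2
      _ = C / log 2 * ((max ℓ 1 : ℕ) : ℝ) ^ (ν - 1 / 2) := by ring
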